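/- arXiv:2012.06581 — 6 statements merged into one kernel-verified Lean document; each statement's English description precedes it below -/
import Mathlib

section
/- Let (t_n) be a strictly increasing sequence of positive reals with t_1 > 1, such that the series Z(s) = ∑_{n=1}^∞ t_n^{-s} converges for all real s > 1. Then lim_{s→∞} (Z(s))^{-1/s} = t_1. -/
open Filter Topology

/-- Extraction of the smallest element of a strictly increasing sequence
from the `-1/s` power of its generalized zeta series. -/
theorem zeta_series_extract_first (t : ℕ → ℝ) (hpos : ∀ n, 0 < t n)
    (hmono : StrictMono t) (h1 : 1 < t 0)
    (hsum : ∀ s : ℝ, 1 < s → Summable fun n => (t n) ^ (-s)) :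
    Tendsto (fun s : ℝ => (∑' n, (t n) ^ (-s)) ^ (-1 / s)) atTop (𝓝 (t 0)) := by
  have ht0 : 0 < t 0 := hpos 0
  set C : ℝ := ∑' n, (t n) ^ (-(2:ℝ)) with hC
  have hsum2 : Summable fun n => (t n) ^ (-(2:ℝ)) := hsum 2 one_lt_two
  have hCpos : 0 < C := Summable.tsum_pos hsum2 (fun n => Real.rpow_nonneg (hpos n).le _) 0
    (Real.rpow_pos_of_pos ht0 _)
  have hle : ∀ n, t 0 ≤ t n := fun n => hmono.monotone (Nat.zero_le n)
  -- limits of the bounding functions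
  have hexp1 : Tendsto (fun s : ℝ => (s - 2) / s) atTop (𝓝 1) := by
    have : Tendsto (fun s : ℝ => 1 - 2 / s) atTop (𝓝 (1 - 0)) :=
      tendsto_const_nhds.sub (Tendsto.div_atTop tendsto_const_nhds tendsto_id)
    rw [sub_zero] at this
    refine this.congr' ?_
    filter_upwards [eventually_gt_atTop (0:ℝ)] with s hs
    field_simp
  have hexp2 : Tendsto (fun s : ℝ => -1 / s) atTop (𝓝 0) :=
    Tendsto.div_atTop tendsto_const_nhds tendsto_id
  have hlow : Tendsto (fun s : ℝ => (t 0) ^ ((s - 2) / s) * C ^ (-1 / s)) atTop (𝓝 (t 0)) := by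
    have h1' : Tendsto (fun s : ℝ => (t 0) ^ ((s - 2) / s)) atTop (𝓝 ((t 0) ^ (1:ℝ))) :=
      Tendsto.rpow tendsto_const_nhds hexp1 (Or.inl ht0.ne')
    have h2' : Tendsto (fun s : ℝ => C ^ (-1 / s)) atTop (𝓝 (C ^ (0:ℝ))) :=
      Tendsto.rpow tendsto_const_nhds hexp2 (Or.inl hCpos.ne')
    have := h1'.mul h2'
    simpa [Real.rpow_one, Real.rpow_zero] using this
  refine tendsto_of_tendsto_of_tendsto_of_le_of_le' hlow tendsto_const_nhds ?_ ?_
  · -- lower bound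
    filter_upwards [eventually_ge_atTop (2:ℝ)] with s hs
    have hs1 : (1:ℝ) < s := by linarith
    have hspos : (0:ℝ) < s := by linarith
    have hS := hsum s hs1
    have hbound : (∑' n, (t n) ^ (-s)) ≤ (t 0) ^ (-(s - 2)) * C := by
      rw [hC, ← tsum_mul_left]
      refine Summable.tsum_le_tsum (fun n => ?_) hS (hsum2.mul_left _)
      have hsplit : (t n) ^ (-s) = (t n) ^ (-(s - 2)) * (t n) ^ (-(2:ℝ)) := by
        rw [← Real.rpow_add (hpos n)]; ring_nf
      rw [hsplit]
      exact mul_le_mul_of_nonneg_right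
        (Real.rpow_le_rpow_of_nonpos ht0 (hle n) (by linarith))
        (Real.rpow_nonneg (hpos n).le _)
    have hB : ((t 0) ^ (-(s - 2)) * C) ^ (-1 / s) ≤ (∑' n, (t n) ^ (-s)) ^ (-1 / s) := by
      have hZpos : 0 < ∑' n, (t n) ^ (-s) :=
        Summable.tsum_pos hS (fun n => Real.rpow_nonneg (hpos n).le _) 0 (Real.rpow_pos_of_pos ht0 _)
      exact Real.rpow_le_rpow_of_nonpos hZpos hbound (by rw [neg_div]; exact neg_nonpos.mpr (by positivity))
    calc (t 0) ^ ((s - 2) / s) * C ^ (-1 / s)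
        = ((t 0) ^ (-(s - 2)) * C) ^ (-1 / s) := by
          rw [Real.mul_rpow (Real.rpow_nonneg ht0.le _) hCpos.le, ← Real.rpow_mul ht0.le]
          congr 1
          field_simp
      _ ≤ _ := hB
  · -- upper bound
    filter_upwards [eventually_ge_atTop (2:ℝ)] with s hs
    have hs1 : (1:ℝ) < s := by linarith
    have hspos : (0:ℝ) < s := by linarith
    have hS := hsum s hs1
    have hlb : (t 0) ^ (-s) ≤ ∑' n, (t n) ^ (-s) :=
      Summable.le_tsum hS 0 (fun n _ => Real.rpow_nonneg (hpos n).le _)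
    have := Real.rpow_le_rpow_of_nonpos (Real.rpow_pos_of_pos ht0 _) hlb
      (by rw [neg_div]; exact neg_nonpos.mpr (by positivity) : -1 / s ≤ 0)
    calc (∑' n, (t n) ^ (-s)) ^ (-1 / s) ≤ ((t 0) ^ (-s)) ^ (-1 / s) := this
      _ = (t 0) ^ ((-s) * (-1 / s)) := by rw [← Real.rpow_mul ht0.le]
      _ = t 0 := by
          rw [show (-s) * (-1 / s) = 1 by field_simp, Real.rpow_one]
end

section
/- Let (t_n) be a strictly increasing sequence of positive reals with t_1 > 1 such that ∑_{n=1}^∞ t_n^{-s} converges for all s > 1. Then for every n ≥ 0, lim_{s→∞} (∑_{k=n+1}^∞ t_k^{-s})^{-1/s} = t_{n+1}. -/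
/-!
Write `S(s) = ∑' k, t (k + n) ^ (-s)` and `a = t n < b = t (n + 1)`. The first term of `S(s)`
is `a ^ (-s)` and the remaining terms are at least `b`, so comparing with a fixed exponent `s₀`
bounds their sum by `C b ^ (-s)`. Hence `1 ≤ a ^ s S(s) ≤ 1 + C' (a / b) ^ s → 1`, and the
`(-1/s)`-th power of `S(s) = a ^ (-s) (a ^ s S(s))` is `a` times a factor tending to `1 ^ 0 = 1`.
-/

open Filter Topology

lemma rpow_neg_le_rpow_neg_mul {x b s₀ s : ℝ} (hb : 0 < b) (hbx : b ≤ x) (hs : s₀ ≤ s) :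
    x ^ (-s) ≤ x ^ (-s₀) * b ^ (s₀ - s) := by
  have hx : 0 < x := hb.trans_le hbx
  calc x ^ (-s) = x ^ (-s₀) * x ^ (s₀ - s) := by rw [← Real.rpow_add hx]; ring_nf
    _ ≤ x ^ (-s₀) * b ^ (s₀ - s) :=
      mul_le_mul_of_nonneg_left (Real.rpow_le_rpow_of_nonpos hb hbx (by linarith))
        (Real.rpow_nonneg hx.le _)

section LowerBoundedTerms

variable {u : ℕ → ℝ} {b s₀ s : ℝ}

lemma summable_rpow_neg_of_le (hb : 0 < b) (hbu : ∀ k, b ≤ u k) (hs : s₀ ≤ s)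
    (hsum : Summable fun k => u k ^ (-s₀)) : Summable fun k => u k ^ (-s) :=
  (hsum.mul_right (b ^ (s₀ - s))).of_nonneg_of_le
    (fun k => Real.rpow_nonneg (hb.trans_le (hbu k)).le _)
    (fun k => rpow_neg_le_rpow_neg_mul hb (hbu k) hs)

lemma tsum_rpow_neg_le (hb : 0 < b) (hbu : ∀ k, b ≤ u k) (hs : s₀ ≤ s)
    (hsum : Summable fun k => u k ^ (-s₀)) :
    ∑' k, u k ^ (-s) ≤ (∑' k, u k ^ (-s₀)) * b ^ (s₀ - s) := by
  rw [← tsum_mul_right]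
  exact (summable_rpow_neg_of_le hb hbu hs hsum).tsum_le_tsum
    (fun k => rpow_neg_le_rpow_neg_mul hb (hbu k) hs) (hsum.mul_right _)

end LowerBoundedTerms

lemma tendsto_rpow_neg_mul_rpow_neg_one_div {a : ℝ} {g : ℝ → ℝ} (ha : 0 < a)
    (hg : Tendsto g atTop (𝓝 1)) :
    Tendsto (fun s => (a ^ (-s) * g s) ^ (-1 / s)) atTop (𝓝 a) := by
  have hexp : Tendsto (fun s : ℝ => -1 / s) atTop (𝓝 0) :=
    tendsto_const_nhds.div_atTop tendsto_id
  have hroot : Tendsto (fun s => g s ^ (-1 / s)) atTop (𝓝 1) := by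
    simpa using hg.rpow hexp (Or.inl one_ne_zero)
  have hlim : Tendsto (fun s => a * g s ^ (-1 / s)) atTop (𝓝 a) := by
    simpa using hroot.const_mul a
  refine hlim.congr' ?_
  filter_upwards [hg.eventually (lt_mem_nhds one_pos), eventually_gt_atTop 0] with s hgs hs
  have hexp_one : -s * (-1 / s) = 1 := by field_simp
  rw [Real.mul_rpow (Real.rpow_nonneg ha.le _) hgs.le, ← Real.rpow_mul ha.le, hexp_one,
    Real.rpow_one]

lemma tendsto_rpow_mul_tsum_rpow_neg {u : ℕ → ℝ} {b s₀ : ℝ} (ha : 0 < u 0) (hab : u 0 < b)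
    (hbu : ∀ k, b ≤ u (k + 1)) (hsum : Summable fun k => u k ^ (-s₀)) :
    Tendsto (fun s : ℝ => u 0 ^ s * ∑' k, u k ^ (-s)) atTop (𝓝 1) := by
  set a := u 0
  have hb : 0 < b := ha.trans hab
  have htail : Summable fun k => u (k + 1) ^ (-s₀) := (summable_nat_add_iff 1).mpr hsum
  set C := ∑' k, u (k + 1) ^ (-s₀)
  have hratio : Tendsto (fun s : ℝ => C * b ^ s₀ * (a / b) ^ s) atTop (𝓝 0) := by
    simpa using (tendsto_rpow_atTop_of_base_lt_one (a / b) (by linarith [div_pos ha hb])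
      ((div_lt_one hb).mpr hab)).const_mul (C * b ^ s₀)
  have hsmall : Tendsto (fun s : ℝ => a ^ s * ∑' k, u (k + 1) ^ (-s)) atTop (𝓝 0) := by
    refine tendsto_of_tendsto_of_tendsto_of_le_of_le' tendsto_const_nhds hratio ?_ ?_
    · exact Eventually.of_forall fun s => mul_nonneg (Real.rpow_nonneg ha.le _)
        (tsum_nonneg fun k => Real.rpow_nonneg (hb.trans_le (hbu k)).le _)
    · filter_upwards [eventually_ge_atTop s₀] with s hs
      calc a ^ s * ∑' k, u (k + 1) ^ (-s) ≤ a ^ s * (C * b ^ (s₀ - s)) := by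
            gcongr
            exact tsum_rpow_neg_le hb hbu hs htail
        _ = C * b ^ s₀ * (a / b) ^ s := by
            rw [Real.rpow_sub hb, Real.div_rpow ha.le hb.le]; ring
  have hlim : Tendsto (fun s : ℝ => 1 + a ^ s * ∑' k, u (k + 1) ^ (-s)) atTop (𝓝 1) := by
    simpa using hsmall.const_add 1
  refine hlim.congr' ?_
  filter_upwards [eventually_ge_atTop s₀] with s hs
  have hsum_s : Summable fun k => u k ^ (-s) :=
    (summable_nat_add_iff 1).mp (summable_rpow_neg_of_le (u := fun k => u (k + 1)) hb hbu hs htail)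
  rw [hsum_s.tsum_eq_zero_add, mul_add, ← Real.rpow_add ha, add_neg_cancel, Real.rpow_zero]

lemma tendsto_tsum_rpow_neg_rpow_neg_one_div {u : ℕ → ℝ} {b s₀ : ℝ} (ha : 0 < u 0)
    (hab : u 0 < b) (hbu : ∀ k, b ≤ u (k + 1)) (hsum : Summable fun k => u k ^ (-s₀)) :
    Tendsto (fun s : ℝ => (∑' k, u k ^ (-s)) ^ (-1 / s)) atTop (𝓝 (u 0)) := by
  refine (tendsto_rpow_neg_mul_rpow_neg_one_div ha
    (tendsto_rpow_mul_tsum_rpow_neg ha hab hbu hsum)).congr fun s => ?_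
  rw [← mul_assoc, ← Real.rpow_add ha, neg_add_cancel, Real.rpow_zero, one_mul]

theorem zeta_series_extract_tail_general (t : ℕ → ℝ) (hpos : ∀ n, 0 < t n)
    (hmono : StrictMono t)
    (hsum : ∀ s : ℝ, 1 < s → Summable fun n => (t n) ^ (-s)) :
    ∀ n : ℕ,
      Tendsto (fun s : ℝ => (∑' k, (t (k + n)) ^ (-s)) ^ (-1 / s)) atTop (𝓝 (t n)) := by
  intro n
  have hshift : Summable fun k => t (k + n) ^ (-(2 : ℝ)) :=
    (summable_nat_add_iff n).mpr (hsum 2 one_lt_two)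
  simpa using tendsto_tsum_rpow_neg_rpow_neg_one_div (u := fun k => t (k + n))
    (by simpa using hpos n) (by simpa using hmono n.lt_succ_self)
    (fun k => hmono.monotone (by omega)) hshift

/-- Recurrence extraction: the `-1/s` power of the tail of the generalized
zeta series recovers the `(n+1)`-st element. -/
theorem zeta_series_extract_tail (t : ℕ → ℝ) (hpos : ∀ n, 0 < t n)
    (hmono : StrictMono t) (h1 : 1 < t 0)
    (hsum : ∀ s : ℝ, 1 < s → Summable fun n => (t n) ^ (-s)) :
    ∀ n : ℕ,
      Tendsto (fun s : ℝ => (∑' k, (t (k + n)) ^ (-s)) ^ (-1 / s)) atTop (𝓝 (t n)) :=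
  zeta_series_extract_tail_general t hpos hmono hsum
end

section
/- Let p_1 < p_2 < p_3 < ... be the primes in increasing order and Q_n(s) = ∏_{k=1}^n (1 − p_k^{-s})^{-1} (with Q_0(s) = 1). Then for every n ≥ 0, lim_{s→∞} (ζ(s) − Q_n(s))^{-1/s} = p_{n+1}, where s ranges over real numbers and ζ is the Riemann zeta function. -/
open Filter Topology Finset

/-!
Let `P = p_{n+1}`. By the Euler product, `Q_n(s)` is the sum of `m ^ (-s)` over the `P`-smooth
numbers `m` (all prime factors below `P`), so `ζ(s) - Q_n(s)` is the sum over the remaining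
`m ≥ 1`, each of which is at least `P`, with `m = P` among them. Hence
`P ^ (-s) ≤ ζ(s) - Q_n(s) ≤ P ^ (2 - s) ζ(2)`, and taking `(-1/s)`-th powers squeezes the
expression between `(P² ζ(2)) ^ (-1/s) P` and `P`.
-/

namespace Nat

theorem image_nth_range_of_infinite {p : ℕ → Prop} [DecidablePred p]
    (hp : (Set.ofPred p).Infinite) (n : ℕ) :
    (range n).image (nth p) = {x ∈ range (nth p n) | p x} := by
  ext x
  simp only [mem_image, mem_range, mem_filter]
  constructor
  · rintro ⟨k, hk, rfl⟩
    exact ⟨nth_strictMono hp hk, nth_mem_of_infinite hp k⟩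
  · rintro ⟨hx, hpx⟩
    refine ⟨count p x, ?_, nth_count hpx⟩
    rwa [← nth_lt_nth hp, nth_count hpx]

theorem prod_range_nth_prime {M : Type*} [CommMonoid M] (f : ℕ → M) (n : ℕ) :
    ∏ k ∈ range n, f (nth Prime k) = ∏ p ∈ (nth Prime n).primesBelow, f p := by
  rw [primesBelow, ← image_nth_range_of_infinite infinite_setOfPred_prime,
    prod_image (nth_injective infinite_setOfPred_prime).injOn]

theorem Prime.notMem_smoothNumbers {p : ℕ} (hp : p.Prime) : p ∉ p.smoothNumbers :=
  fun h => (mem_smoothNumbers'.mp h p hp dvd_rfl).false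

end Nat

noncomputable def Real.natRpowHom (t : ℝ) : ℕ →* ℝ where
  toFun m := (m : ℝ) ^ t
  map_one' := by simp
  map_mul' m k := by
    push_cast
    exact Real.mul_rpow m.cast_nonneg k.cast_nonneg

theorem Real.summable_natCast_rpow_neg {s : ℝ} (hs : 1 < s) :
    Summable (fun m : ℕ => (m : ℝ) ^ (-s)) :=
  Real.summable_nat_rpow.mpr (by linarith)

theorem Nat.prod_primesBelow_rpow_eq_tsum_smoothNumbers {s : ℝ} (hs : 1 < s) (N : ℕ) :
    ∏ p ∈ N.primesBelow, (1 - (p : ℝ) ^ (-s))⁻¹ =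
      ∑' m : N.smoothNumbers, ((m : ℕ) : ℝ) ^ (-s) :=
  EulerProduct.prod_primesBelow_geometric_eq_tsum_smoothNumbers (f := Real.natRpowHom (-s))
    (Real.summable_natCast_rpow_neg hs) N

theorem tsum_succ_rpow_neg {s : ℝ} (hs : 1 < s) :
    ∑' m : ℕ, ((m : ℝ) + 1) ^ (-s) = ∑' m : ℕ, (m : ℝ) ^ (-s) := by
  rw [(Real.summable_natCast_rpow_neg hs).tsum_eq_zero_add, Nat.cast_zero,
    Real.zero_rpow (by linarith), zero_add]
  push_cast
  rfl

theorem tsum_succ_rpow_neg_sub_prod_primesBelow {s : ℝ} (hs : 1 < s) (N : ℕ) :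
    ∑' m : ℕ, ((m : ℝ) + 1) ^ (-s) - ∏ p ∈ N.primesBelow, (1 - (p : ℝ) ^ (-s))⁻¹ =
      ∑' m : ↥(N.smoothNumbers)ᶜ, ((m : ℕ) : ℝ) ^ (-s) := by
  rw [tsum_succ_rpow_neg hs, Nat.prod_primesBelow_rpow_eq_tsum_smoothNumbers hs,
    ← (Real.summable_natCast_rpow_neg hs).tsum_subtype_add_tsum_subtype_compl N.smoothNumbers,
    add_sub_cancel_left]

theorem rpow_neg_le_tsum_compl_smoothNumbers {p : ℕ} (hp : p.Prime) {s : ℝ} (hs : 1 < s) :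
    (p : ℝ) ^ (-s) ≤ ∑' m : ↥(p.smoothNumbers)ᶜ, ((m : ℕ) : ℝ) ^ (-s) :=
  ((Real.summable_natCast_rpow_neg hs).subtype _).le_tsum ⟨p, hp.notMem_smoothNumbers⟩
    (fun _ _ => Real.rpow_nonneg (Nat.cast_nonneg _) _)

theorem tsum_subtype_rpow_neg_le {S : Set ℕ} {P : ℝ} (hP : 0 < P)
    (hS : ∀ m ∈ S, m ≠ 0 → P ≤ m) {s t : ℝ} (ht : 1 < t) (hts : t ≤ s) :
    ∑' m : S, ((m : ℕ) : ℝ) ^ (-s) ≤ P ^ (t - s) * ∑' m : ℕ, (m : ℝ) ^ (-t) := by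
  have hterm (m : S) : ((m : ℕ) : ℝ) ^ (-s) ≤ P ^ (t - s) * ((m : ℕ) : ℝ) ^ (-t) := by
    obtain ⟨m, hm⟩ := m
    rcases eq_or_ne m 0 with rfl | hm0
    · simp [Real.zero_rpow (show -s ≠ 0 by linarith), Real.zero_rpow (show -t ≠ 0 by linarith)]
    have hPm : P ≤ m := hS m hm hm0
    have hm_pos : (0 : ℝ) < m := hP.trans_le hPm
    calc (m : ℝ) ^ (-s) = (m : ℝ) ^ (t - s) * (m : ℝ) ^ (-t) := by
          rw [← Real.rpow_add hm_pos]; ring_nf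
      _ ≤ P ^ (t - s) * (m : ℝ) ^ (-t) :=
          mul_le_mul_of_nonneg_right (Real.rpow_le_rpow_of_nonpos hP hPm (by linarith))
            (by positivity)
  have hsum := Real.summable_natCast_rpow_neg ht
  calc ∑' m : S, ((m : ℕ) : ℝ) ^ (-s)
        ≤ ∑' m : S, P ^ (t - s) * ((m : ℕ) : ℝ) ^ (-t) :=
        Summable.tsum_le_tsum hterm
          ((Real.summable_natCast_rpow_neg (ht.trans_le hts)).subtype _)
          ((hsum.subtype _).mul_left _)
    _ = P ^ (t - s) * ∑' m : S, ((m : ℕ) : ℝ) ^ (-t) := tsum_mul_left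
    _ ≤ P ^ (t - s) * ∑' m : ℕ, (m : ℝ) ^ (-t) := by
        gcongr
        exact Summable.tsum_subtype_le _ _ (fun m => by positivity) hsum

theorem tendsto_rpow_neg_one_div_of_le_of_le {E : ℝ → ℝ} {P C : ℝ} (hP : 0 < P)
    (hlow : ∀ᶠ s in atTop, P ^ (-s) ≤ E s) (hup : ∀ᶠ s in atTop, E s ≤ C * P ^ (-s)) :
    Tendsto (fun s => E s ^ (-1 / s)) atTop (𝓝 P) := by
  have hC : 1 ≤ C := by
    obtain ⟨s, hls, hus⟩ := (hlow.and hup).exists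
    exact le_of_mul_le_mul_right (by simpa using hls.trans hus) (by positivity : 0 < P ^ (-s))
  have hroot {s : ℝ} (hs : s ≠ 0) : (P ^ (-s)) ^ (-1 / s) = P := by
    rw [show -1 / s = (-s)⁻¹ by field_simp, Real.rpow_rpow_inv hP.le (neg_ne_zero.mpr hs)]
  have hexp : Tendsto (fun s : ℝ => -1 / s) atTop (𝓝 0) := by
    simpa only [neg_div, neg_zero, one_div] using (tendsto_inv_atTop_zero (𝕜 := ℝ)).neg
  have hlim : Tendsto (fun s : ℝ => C ^ (-1 / s) * P) atTop (𝓝 P) := by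
    simpa using
      ((Real.continuousAt_const_rpow (by positivity : C ≠ 0)).tendsto.comp hexp).mul_const P
  refine tendsto_of_tendsto_of_tendsto_of_le_of_le' hlim tendsto_const_nhds ?_ ?_
  all_goals
    filter_upwards [hlow, hup, eventually_gt_atTop 0] with s hls hus hs
    have hE : 0 < E s := (by positivity : 0 < P ^ (-s)).trans_le hls
    have hneg : -1 / s ≤ 0 := div_nonpos_of_nonpos_of_nonneg (by norm_num) hs.le
  · calc C ^ (-1 / s) * P = (C * P ^ (-s)) ^ (-1 / s) := by
          rw [Real.mul_rpow (by positivity) (by positivity), hroot hs.ne']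
      _ ≤ E s ^ (-1 / s) := Real.rpow_le_rpow_of_nonpos hE hus hneg
  · calc E s ^ (-1 / s) ≤ (P ^ (-s)) ^ (-1 / s) :=
          Real.rpow_le_rpow_of_nonpos (by positivity) hls hneg
      _ = P := hroot hs.ne'

/-- Golomb's recurrence formula for primes: with `Q_n(s)` the partial Euler
product over the first `n` primes, `(ζ(s) - Q_n(s))^{-1/s} → p_{n+1}`. -/
theorem golomb_recurrence (n : ℕ) :
    Tendsto (fun s : ℝ =>
        ((∑' m : ℕ, ((m : ℝ) + 1) ^ (-s)) -
          ∏ k ∈ Finset.range n, (1 - (Nat.nth Nat.Prime k : ℝ) ^ (-s))⁻¹) ^ (-1 / s))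
      atTop (𝓝 (Nat.nth Nat.Prime n : ℝ)) := by
  set P := Nat.nth Nat.Prime n
  have hP : P.Prime := Nat.prime_nth_prime n
  have hP_pos : (0 : ℝ) < P := by exact_mod_cast hP.pos
  have htail {s : ℝ} (hs : 1 < s) :
      ∑' m : ℕ, ((m : ℝ) + 1) ^ (-s) -
          ∏ k ∈ range n, (1 - (Nat.nth Nat.Prime k : ℝ) ^ (-s))⁻¹ =
        ∑' m : ↥(P.smoothNumbers)ᶜ, ((m : ℕ) : ℝ) ^ (-s) := by
    rw [Nat.prod_range_nth_prime (fun p => (1 - (p : ℝ) ^ (-s))⁻¹),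
      tsum_succ_rpow_neg_sub_prod_primesBelow hs]
  refine tendsto_rpow_neg_one_div_of_le_of_le
    (C := P ^ (2 : ℝ) * ∑' m : ℕ, (m : ℝ) ^ (-2 : ℝ)) hP_pos ?_ ?_
  · filter_upwards [eventually_gt_atTop 1] with s hs
    rw [htail hs]
    exact rpow_neg_le_tsum_compl_smoothNumbers hP hs
  · filter_upwards [eventually_ge_atTop 2] with s hs
    have hP_le (m : ℕ) (hm : m ∈ (P.smoothNumbers)ᶜ) (hm0 : m ≠ 0) : (P : ℝ) ≤ m :=
      Nat.cast_le.mpr (Nat.smoothNumbers_compl P ⟨hm, hm0⟩)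
    rw [htail (by linarith), mul_right_comm, ← Real.rpow_add hP_pos, ← sub_eq_add_neg]
    exact tsum_subtype_rpow_neg_le hP_pos hP_le one_lt_two hs
end

section
/- Let (t_n) be a strictly increasing sequence of positive reals with ∑_{n=1}^∞ e^{-t_n² s} < ∞ for all s > 0, and set Z₄(s) = ∑_{n=1}^∞ e^{-t_n² s}. Then for every n ≥ 0, lim_{s→∞} sqrt(−(1/s)·log(Z₄(s) − ∑_{k=1}^n e^{-t_k² s})) = t_{n+1}. -/
/-!
Write `λ_i = t_{i+n}²`. Past the first `n` terms, `Z₄(s) - ∑_{k<n} e^{-t_k² s}` is the tail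
`∑_i e^{-λ_i s} = e^{-λ_0 s} R(s)` with `R(s) = ∑_i e^{-(λ_i - λ_0) s}`. Since `λ_i ≥ λ_0`,
`R` is antitone in `s` and `R(s) ≥ 1` (its `i = 0` term), so `log R(s)` stays bounded and
`-(1/s) log` of the tail is `λ_0 + o(1)`; taking square roots gives `t_n`.
-/

open Filter Topology

lemma tendsto_one_div_mul_log_of_bounded {f : ℝ → ℝ} {C : ℝ}
    (hf : ∀ᶠ s in atTop, 1 ≤ f s ∧ f s ≤ C) :
    Tendsto (fun s => 1 / s * Real.log (f s)) atTop (𝓝 0) := by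
  have hC : Tendsto (fun s : ℝ => 1 / s * Real.log C) atTop (𝓝 0) := by
    simpa only [one_div, zero_mul] using tendsto_inv_atTop_zero.mul_const (Real.log C)
  refine tendsto_of_tendsto_of_tendsto_of_le_of_le' tendsto_const_nhds hC ?_ ?_
  · filter_upwards [hf, eventually_gt_atTop 0] with s ⟨h1, _⟩ hs
    have := Real.log_nonneg h1
    positivity
  · filter_upwards [hf, eventually_gt_atTop 0] with s ⟨h1, h2⟩ hs
    gcongr

section TsumExp

variable {ι : Type*} {d : ι → ℝ}

lemma one_le_tsum_exp_neg_mul {i₀ : ι} (h₀ : d i₀ = 0) {s : ℝ}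
    (hs : Summable fun i => Real.exp (-d i * s)) :
    1 ≤ ∑' i, Real.exp (-d i * s) := by
  simpa [h₀] using hs.le_tsum i₀ fun j _ => (Real.exp_pos _).le

lemma tsum_exp_neg_mul_le_of_le (hd : ∀ i, 0 ≤ d i) {s s' : ℝ} (hss' : s ≤ s')
    (hs : Summable fun i => Real.exp (-d i * s))
    (hs' : Summable fun i => Real.exp (-d i * s')) :
    ∑' i, Real.exp (-d i * s') ≤ ∑' i, Real.exp (-d i * s) :=
  hs'.tsum_le_tsum (fun i => Real.exp_le_exp.2 (by nlinarith [hd i])) hs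

lemma tendsto_one_div_mul_log_tsum_exp_neg_mul {i₀ : ι} (h₀ : d i₀ = 0) (hd : ∀ i, 0 ≤ d i)
    (hsum : ∀ s : ℝ, 0 < s → Summable fun i => Real.exp (-d i * s)) :
    Tendsto (fun s => 1 / s * Real.log (∑' i, Real.exp (-d i * s))) atTop (𝓝 0) := by
  refine tendsto_one_div_mul_log_of_bounded (C := ∑' i, Real.exp (-d i * 1)) ?_
  filter_upwards [eventually_ge_atTop 1] with s hs
  exact ⟨one_le_tsum_exp_neg_mul h₀ (hsum s (by linarith)),
    tsum_exp_neg_mul_le_of_le hd hs (hsum 1 one_pos) (hsum s (by linarith))⟩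

theorem tendsto_neg_one_div_mul_log_tsum_exp_neg_mul {lam : ι → ℝ} {i₀ : ι}
    (hmin : ∀ i, lam i₀ ≤ lam i)
    (hsum : ∀ s : ℝ, 0 < s → Summable fun i => Real.exp (-lam i * s)) :
    Tendsto (fun s => -(1 / s) * Real.log (∑' i, Real.exp (-lam i * s))) atTop
      (𝓝 (lam i₀)) := by
  let d : ι → ℝ := fun i => lam i - lam i₀
  have hd₀ : d i₀ = 0 := sub_self _
  have hexp : ∀ s i, Real.exp (-lam i * s) = Real.exp (-lam i₀ * s) * Real.exp (-d i * s) :=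
    fun s i => by rw [← Real.exp_add]; simp only [d]; ring_nf
  have hdsum : ∀ s : ℝ, 0 < s → Summable fun i => Real.exp (-d i * s) := fun s hs =>
    (summable_mul_left_iff (Real.exp_ne_zero (-lam i₀ * s))).1 <|
      by simpa only [← hexp s] using hsum s hs
  have hR := tendsto_one_div_mul_log_tsum_exp_neg_mul hd₀ (fun i => sub_nonneg.2 (hmin i)) hdsum
  refine (tendsto_const_nhds.sub hR).congr' ?_ |>.trans (by rw [sub_zero])
  filter_upwards [eventually_gt_atTop 0] with s hs
  have hpos : 0 < ∑' i, Real.exp (-d i * s) :=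
    one_pos.trans_le (one_le_tsum_exp_neg_mul hd₀ (hdsum s hs))
  rw [tsum_congr (hexp s), tsum_mul_left, Real.log_mul (Real.exp_ne_zero _) hpos.ne',
    Real.log_exp]
  field_simp
  ring

end TsumExp

/-- Recurrence extraction for the Jacobi-theta-type series: removing the first
`n` exponential terms, the decay rate of the remainder recovers `t_{n+1}`. -/
theorem theta_series_extract_tail (t : ℕ → ℝ) (hpos : ∀ n, 0 < t n)
    (hmono : StrictMono t)
    (hsum : ∀ s : ℝ, 0 < s → Summable fun n => Real.exp (-(t n) ^ 2 * s)) :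
    ∀ n : ℕ,
      Tendsto (fun s : ℝ =>
          Real.sqrt (-(1 / s) * Real.log ((∑' k, Real.exp (-(t k) ^ 2 * s)) -
            ∑ k ∈ Finset.range n, Real.exp (-(t k) ^ 2 * s))))
        atTop (𝓝 (t n)) := by
  intro n
  have hmin : ∀ i, t (0 + n) ^ 2 ≤ t (i + n) ^ 2 := fun i =>
    pow_le_pow_left₀ (hpos _).le (hmono.monotone (by omega)) 2
  have htail := tendsto_neg_one_div_mul_log_tsum_exp_neg_mul (lam := fun i => t (i + n) ^ 2) hmin
    fun s hs => (summable_nat_add_iff n).2 (hsum s hs)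
  have hsqrt := (Real.continuous_sqrt.tendsto _).comp htail
  rw [zero_add, Real.sqrt_sq (hpos n).le] at hsqrt
  refine hsqrt.congr' ?_
  filter_upwards [eventually_gt_atTop 0] with s hs
  rw [Function.comp_apply, ← (hsum s hs).sum_add_tsum_nat_add n, add_sub_cancel_left]
end

section
/- For t_1 < t_2 < ... positive reals with 1/4 + t_1² > 1, setting w_n(s) = (1/2 + i t_n)^{-s} + (1/2 − i t_n)^{-s} and Z₂(s) = ∑_n w_n(s) (assumed absolutely convergent for s > 1), one has lim_{s→∞, s∈ℕ} ( (1/2)·(Z₂(s)² − Z₂(2s)) )^{-1/s} = 1/4 + t_1². -/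
open Filter Topology Complex

lemma aux_zpow_anti {b c : ℝ} (hb : 0 < b) (hbc : b ≤ c) (k : ℕ) :
    c ^ (-(k:ℤ)) ≤ b ^ (-(k:ℤ)) := by
  rw [zpow_neg, zpow_neg, zpow_natCast, zpow_natCast]
  exact inv_anti₀ (pow_pos hb k) (pow_le_pow_left₀ hb.le hbc k)

lemma aux_cpow_tendsto (A : ℝ) (hA : 1 < A) (F ε : ℕ → ℂ)
    (hF : ∀ s : ℕ, 4 ≤ s → F s = ((A ^ (-(s:ℤ)) : ℝ) : ℂ) * (1 + ε s))
    (hε : Tendsto ε atTop (𝓝 0)) :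
    Tendsto (fun s : ℕ => F s ^ (-(1:ℂ)/s)) atTop (𝓝 (A : ℂ)) := by
  have hA0 : (0:ℝ) < A := lt_trans one_pos hA
  have h1ε : Tendsto (fun s => 1 + ε s) atTop (𝓝 1) := by
    simpa using (tendsto_const_nhds.add hε)
  have hlog : Tendsto (fun s => Complex.log (1 + ε s)) atTop (𝓝 0) := by
    have hc : ContinuousAt Complex.log 1 := continuousAt_clog (by simp [Complex.slitPlane])
    simpa [Function.comp_def] using hc.tendsto.comp h1ε
  have hinv : Tendsto (fun s : ℕ => -(1:ℂ)/s) atTop (𝓝 0) := by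
    have : Tendsto (fun s : ℕ => ((1 / s : ℝ) : ℂ)) atTop (𝓝 ((0:ℝ):ℂ)) :=
      (Complex.continuous_ofReal.tendsto _).comp tendsto_one_div_atTop_nhds_zero_nat
    have h2 : Tendsto (fun s : ℕ => -((1 / s : ℝ) : ℂ)) atTop (𝓝 (-((0:ℝ):ℂ))) := this.neg
    simpa [neg_div, Complex.ofReal_div] using h2
  have hg : Tendsto (fun s : ℕ => Complex.log (1 + ε s) * (-(1:ℂ)/s) + (Real.log A : ℂ))
      atTop (𝓝 (Real.log A : ℂ)) := by
    simpa using (hlog.mul hinv).add (tendsto_const_nhds (x := (Real.log A : ℂ)))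
  have key : Tendsto (fun s : ℕ =>
      Complex.exp (Complex.log (1 + ε s) * (-(1:ℂ)/s) + (Real.log A : ℂ)))
      atTop (𝓝 (A : ℂ)) := by
    have := (Complex.continuous_exp.tendsto _).comp hg
    simpa [Function.comp_def, ← Complex.ofReal_exp, Real.exp_log hA0] using this
  refine Tendsto.congr' ?_ key
  have hε1 : ∀ᶠ s : ℕ in atTop, ‖ε s‖ < 1 := by
    have h := hε.norm
    rw [norm_zero] at h
    exact h.eventually_lt_const (by norm_num : (0:ℝ) < 1)
  filter_upwards [hε1, eventually_ge_atTop 4] with s hεs hs4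
  have hs0 : (s:ℂ) ≠ 0 := by
    have : s ≠ 0 := by omega
    exact_mod_cast Nat.cast_ne_zero.mpr this
  have hne : (1 : ℂ) + ε s ≠ 0 := by
    intro h
    have : ‖ε s‖ = 1 := by
      have : ε s = -1 := by linear_combination h
      simp [this]
    linarith
  have hApow : (0:ℝ) < A ^ (-(s:ℤ)) := zpow_pos hA0 _
  have hF0 : F s ≠ 0 := by
    rw [hF s hs4]
    exact mul_ne_zero (by exact_mod_cast hApow.ne') hne
  rw [cpow_def_of_ne_zero hF0, hF s hs4, Complex.log_ofReal_mul hApow hne,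
    Real.log_zpow]
  congr 1
  push_cast
  field_simp
  ring

set_option maxHeartbeats 1000000 in
/-- Matsuoka's extraction of the first zero modulus: with
`w_n(s) = (1/2+it_n)^{-s} + (1/2-it_n)^{-s}` and `Z₂(s) = ∑_n w_n(s)`,
one has `((1/2)(Z₂(s)² - Z₂(2s)))^{-1/s} → 1/4 + t₁²` as integer `s → ∞`. -/
theorem matsuoka_extraction (t : ℕ → ℝ) (hpos : ∀ n, 0 < t n)
    (hmono : StrictMono t) (h1 : 1 < 1 / 4 + (t 0) ^ 2)
    (w : ℕ → ℕ → ℂ)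
    (hw : ∀ n s, w n s = (1 / 2 + (t n : ℂ) * I) ^ (-(s : ℤ)) +
        (1 / 2 - (t n : ℂ) * I) ^ (-(s : ℤ)))
    (hsum : ∀ s : ℕ, 1 < s → Summable fun n => w n s) :
    Tendsto (fun s : ℕ =>
        ((1 / 2 : ℂ) * ((∑' n, w n s) ^ 2 - ∑' n, w n (2 * s))) ^ (-(1 : ℂ) / s))
      atTop (𝓝 ((1 / 4 + (t 0) ^ 2 : ℝ) : ℂ)) := by
  set a : ℕ → ℝ := fun n => 1 / 4 + t n ^ 2 with ha
  set r : ℕ → ℝ := fun n => Real.sqrt (a n) with hrdef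
  have hapos : ∀ n, (0:ℝ) < a n := fun n => by positivity
  have ha1 : ∀ n, 1 < a n := by
    intro n
    have h0 : t 0 ≤ t n := hmono.monotone (Nat.zero_le n)
    have h2 : t 0 ^ 2 ≤ t n ^ 2 := pow_le_pow_left₀ (hpos 0).le h0 2
    simp only [ha]
    nlinarith
  have hamono : ∀ m n : ℕ, m < n → a m < a n := by
    intro m n hmn
    have h0 := hmono hmn
    have h2 := hpos m
    simp only [ha]
    nlinarith
  have hrsq : ∀ n, r n ^ 2 = a n := fun n => Real.sq_sqrt (hapos n).le
  have hrnn : ∀ n, 0 ≤ r n := fun n => Real.sqrt_nonneg _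
  have hr1 : ∀ n, 1 < r n := by
    intro n
    nlinarith [hrsq n, ha1 n, hrnn n]
  have hrpos : ∀ n, 0 < r n := fun n => lt_trans one_pos (hr1 n)
  have hr01 : r 0 < r 1 := by
    have h := hamono 0 1 one_pos
    nlinarith [hrsq 0, hrsq 1, hrpos 0, hrpos 1]
  have hrmono1 : ∀ n : ℕ, r 1 ≤ r (n+1) := by
    intro n
    have : a 1 ≤ a (n+1) := by
      rcases Nat.lt_or_ge 1 (n+1) with h | h
      · exact (hamono 1 (n+1) h).le
      · have : n = 0 := by omega
        simp [this]
    exact Real.sqrt_le_sqrt this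
  have hznorm : ∀ n, ‖(1/2 + (t n:ℂ)*I)‖ = r n := by
    intro n
    rw [Complex.norm_def]
    congr 1
    simp [Complex.normSq_apply, ha]
    ring
  have hz'norm : ∀ n, ‖(1/2 - (t n:ℂ)*I)‖ = r n := by
    intro n
    rw [Complex.norm_def]
    congr 1
    simp [Complex.normSq_apply, ha]
    ring
  have hz0 : ∀ n, (1/2 + (t n:ℂ)*I) ≠ 0 := by
    intro n h
    have := hznorm n
    rw [h, norm_zero] at this
    exact (hrpos n).ne this
  have hz0' : ∀ n, (1/2 - (t n:ℂ)*I) ≠ 0 := by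
    intro n h
    have := hz'norm n
    rw [h, norm_zero] at this
    exact (hrpos n).ne this
  have hzmul : ∀ n, (1/2 + (t n:ℂ)*I) * (1/2 - (t n:ℂ)*I) = ((a n : ℝ) : ℂ) := by
    intro n
    simp only [ha]
    push_cast
    linear_combination (-(t n:ℂ)^2) * Complex.I_sq
  have key : ∀ n s : ℕ, (w n s)^2 - w n (2*s) = 2 * (((a n) ^ (-(s:ℤ)) : ℝ) : ℂ) := by
    intro n s
    have h2 : (-(((2*s : ℕ)) : ℤ)) = (-(s:ℤ)) * 2 := by push_cast; ring
    rw [hw n s, hw n (2*s), h2, zpow_mul, zpow_mul, Complex.ofReal_zpow, ← hzmul n,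
      mul_zpow, zpow_two, zpow_two]
    ring
  have hwb : ∀ n s : ℕ, ‖w n s‖ ≤ 2 * (r n)^(-(s:ℤ)) := by
    intro n s
    rw [hw]
    refine le_trans (norm_add_le _ _) (le_of_eq ?_)
    rw [norm_zpow, norm_zpow, hznorm n, hz'norm n]
    ring
  -- summability of a n ^ (-2)
  have hsum2 : Summable (fun n => (a n) ^ (-(2:ℤ))) := by
    have h2 := hsum 2 one_lt_two
    have h4 := hsum 4 (by norm_num)
    have hn2 : Summable fun n => ‖w n 2‖ := summable_norm_iff.mpr h2
    have hb : ∀ n, ‖(w n 2)^2‖ ≤ 2 * ‖w n 2‖ := by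
      intro n
      rw [norm_pow]
      have h1n : ‖w n 2‖ ≤ 2 := by
        refine le_trans (hwb n 2) ?_
        have hle := aux_zpow_anti one_pos (hr1 n).le 2
        simp only [one_zpow] at hle
        linarith
      nlinarith [norm_nonneg (w n 2)]
    have hsq : Summable (fun n => (w n 2)^2) :=
      Summable.of_norm_bounded (hn2.mul_left 2) hb
    have hdiff : Summable (fun n => (1/2 : ℂ) * ((w n 2)^2 - w n (2*2))) :=
      ((hsq.sub (by simpa using h4)).mul_left _)
    have hcast : Summable (fun n => (((a n) ^ (-(2:ℤ)) : ℝ) : ℂ)) := by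
      refine hdiff.congr fun n => ?_
      rw [show ((2:ℕ)) = 2 from rfl, key n 2]
      ring
    exact Complex.summable_ofReal.mp hcast
  have hC : Summable (fun n => (a (n+1))^(-(2:ℤ))) := (summable_nat_add_iff 1).mpr hsum2
  set C : ℝ := ∑' n, (a (n+1))^(-(2:ℤ)) with hCdef
  have hC0 : 0 ≤ C := tsum_nonneg fun n => by positivity
  have hr4 : ∀ m, (r m)^(-(4:ℤ)) = (a m)^(-(2:ℤ)) := by
    intro m
    have h2 : (r m)^((2:ℕ):ℤ) = a m := by rw [zpow_natCast, hrsq]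
    rw [show (-(4:ℤ)) = ((2:ℕ):ℤ) * (-2:ℤ) by norm_num, zpow_mul, h2]
  set K : ℝ := 2 * (r 1)^(4:ℤ) * C with hKdef
  have hK0 : 0 ≤ K := mul_nonneg (mul_nonneg (by norm_num) (by positivity)) hC0
  have htail' : ∀ s : ℕ, 4 ≤ s → ‖∑' n, w (n+1) s‖ ≤ K * (r 1)^(-(s:ℤ)) := by
    intro s hs
    have hs1 : 1 < s := by omega
    have hnr : Summable fun n => ‖w (n+1) s‖ :=
      (summable_nat_add_iff 1).mpr (summable_norm_iff.mpr (hsum s hs1))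
    refine le_trans (norm_tsum_le_tsum_norm hnr) ?_
    have hbound : ∀ n, ‖w (n+1) s‖ ≤ 2 * (r 1)^((4:ℤ)-s) * (a (n+1))^(-(2:ℤ)) := by
      intro n
      refine le_trans (hwb (n+1) s) ?_
      have hsplit : (-(s:ℤ)) = (-(((s-4:ℕ)):ℤ)) + (-(4:ℤ)) := by omega
      rw [hsplit, zpow_add₀ (hrpos (n+1)).ne', hr4 (n+1)]
      have hle1 : (r (n+1))^(-((s-4:ℕ):ℤ)) ≤ (r 1)^(-((s-4:ℕ):ℤ)) :=
        aux_zpow_anti (hrpos 1) (hrmono1 n) _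
      have heq2 : (r 1)^(-((s-4:ℕ):ℤ)) = (r 1)^((4:ℤ)-s) := by
        congr 1
        omega
      rw [heq2] at hle1
      have h3 : (0:ℝ) ≤ (a (n+1))^(-(2:ℤ)) := by positivity
      calc 2 * ((r (n+1))^(-((s-4:ℕ):ℤ)) * (a (n+1))^(-(2:ℤ)))
          ≤ 2 * ((r 1)^((4:ℤ)-s) * (a (n+1))^(-(2:ℤ))) := by
            have := mul_le_mul_of_nonneg_right hle1 h3
            linarith
        _ = 2 * (r 1)^((4:ℤ)-s) * (a (n+1))^(-(2:ℤ)) := by ring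
    calc ∑' n, ‖w (n+1) s‖ ≤ ∑' n, 2 * (r 1)^((4:ℤ)-s) * (a (n+1))^(-(2:ℤ)) :=
        Summable.tsum_le_tsum hbound hnr (hC.mul_left _)
      _ = 2 * (r 1)^((4:ℤ)-s) * C := by rw [tsum_mul_left]
      _ = K * (r 1)^(-(s:ℤ)) := by
          rw [sub_eq_add_neg, zpow_add₀ (hrpos 1).ne', hKdef]
          ring
  set F : ℕ → ℂ := fun s => (1/2 : ℂ) * ((∑' n, w n s)^2 - ∑' n, w n (2*s)) with hFdef
  set ε : ℕ → ℂ := fun s => F s * (((a 0) ^ ((s:ℤ)) : ℝ) : ℂ) - 1 with hεdef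
  have ha0c : ((a 0 : ℝ):ℂ) ≠ 0 := by
    exact_mod_cast (hapos 0).ne'
  have hone : ∀ s : ℕ, ((a 0:ℝ):ℂ)^(-(s:ℤ)) * ((a 0:ℝ):ℂ)^((s:ℤ)) = 1 := by
    intro s
    rw [← zpow_add₀ ha0c]
    simp
  have hF : ∀ s : ℕ, 4 ≤ s → F s = (((a 0) ^ (-(s:ℤ)) : ℝ) : ℂ) * (1 + ε s) := by
    intro s _
    simp only [hεdef]
    rw [Complex.ofReal_zpow, Complex.ofReal_zpow]
    linear_combination (-(F s)) * hone s
  set M : ℝ := 2*K + K^2 + K with hMdef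
  have hεbound : ∀ s : ℕ, 4 ≤ s → ‖ε s‖ ≤ M * (r 0 / r 1)^s := by
    intro s hs
    have hs1 : 1 < s := by omega
    have h2s4 : 4 ≤ 2*s := by omega
    have h2s1 : 1 < 2*s := by omega
    have e1 := Summable.tsum_eq_zero_add (hsum s hs1)
    have e2 := Summable.tsum_eq_zero_add (hsum (2*s) h2s1)
    set T : ℂ := ∑' n, w (n+1) s with hTdef
    set T2 : ℂ := ∑' n, w (n+1) (2*s) with hT2def
    have hR : F s - (((a 0)^(-(s:ℤ)) : ℝ) : ℂ) = w 0 s * T + (1/2 : ℂ)*(T^2 - T2) := by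
      simp only [hFdef]
      rw [e1, e2]
      linear_combination (1/2 : ℂ) * key 0 s
    set x : ℝ := (r 0)^(-(s:ℤ)) with hxdef
    set y : ℝ := (r 1)^(-(s:ℤ)) with hydef
    have hx0 : 0 < x := zpow_pos (hrpos 0) _
    have hy0 : 0 < y := zpow_pos (hrpos 1) _
    have hyx : y ≤ x := aux_zpow_anti (hrpos 0) hr01.le s
    have hTb : ‖T‖ ≤ K * y := htail' s hs
    have hT2b : ‖T2‖ ≤ K * (y*y) := by
      refine le_trans (htail' (2*s) h2s4) (le_of_eq ?_)
      rw [hydef, ← zpow_add₀ (hrpos 1).ne']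
      congr 2
      push_cast
      ring
    have hw0 : ‖w 0 s‖ ≤ 2 * x := hwb 0 s
    have hRb : ‖F s - (((a 0)^(-(s:ℤ)) : ℝ) : ℂ)‖ ≤ M * (x * y) := by
      rw [hR]
      refine le_trans (norm_add_le _ _) ?_
      have n1 : ‖w 0 s * T‖ ≤ 2*K*(x*y) := by
        rw [norm_mul]
        calc ‖w 0 s‖ * ‖T‖ ≤ (2*x) * (K*y) :=
            mul_le_mul hw0 hTb (norm_nonneg _) (by positivity)
          _ = 2*K*(x*y) := by ring
      have n2 : ‖(1/2 : ℂ)*(T^2 - T2)‖ ≤ (1/2)*(‖T‖^2 + ‖T2‖) := by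
        rw [norm_mul]
        have : ‖T^2 - T2‖ ≤ ‖T‖^2 + ‖T2‖ := by
          refine le_trans (norm_sub_le _ _) ?_
          rw [norm_pow]
        have h12 : ‖(1/2 : ℂ)‖ = (1/2 : ℝ) := by norm_num
        rw [h12]
        linarith
      have n3 : ‖T‖^2 ≤ K^2*(x*y) := by
        have h := mul_le_mul hTb hTb (norm_nonneg _) (by positivity)
        have h2 : y*y ≤ x*y := mul_le_mul_of_nonneg_right hyx hy0.le
        nlinarith [norm_nonneg T]
      have n4 : ‖T2‖ ≤ K*(x*y) := by
        have h2 : y*y ≤ x*y := mul_le_mul_of_nonneg_right hyx hy0.le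
        nlinarith
      have hxy : 0 ≤ x*y := by positivity
      have hK2 : 0 ≤ K^2*(x*y) := by positivity
      have hKxy : 0 ≤ K*(x*y) := by positivity
      rw [hMdef]
      nlinarith
    have hεeq : ε s = (F s - (((a 0)^(-(s:ℤ)) : ℝ) : ℂ)) * (((a 0)^((s:ℤ)) : ℝ) : ℂ) := by
      simp only [hεdef]
      rw [Complex.ofReal_zpow, Complex.ofReal_zpow]
      linear_combination hone s
    rw [hεeq, norm_mul]
    have hnorm2 : ‖(((a 0)^((s:ℤ)) : ℝ) : ℂ)‖ = (a 0)^((s:ℤ)) := by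
      rw [Complex.norm_real]
      exact abs_of_pos (zpow_pos (hapos 0) _)
    rw [hnorm2]
    have hfin : M * (x * y) * (a 0)^((s:ℤ)) = M * (r 0 / r 1)^s := by
      have h0 : (r 0)^s ≠ 0 := pow_ne_zero _ (hrpos 0).ne'
      have h1 : (r 1)^s ≠ 0 := pow_ne_zero _ (hrpos 1).ne'
      rw [hxdef, hydef, zpow_neg, zpow_neg, zpow_natCast, zpow_natCast, zpow_natCast,
        ← hrsq 0, div_pow]
      field_simp
      ring
    calc ‖F s - (((a 0)^(-(s:ℤ)) : ℝ) : ℂ)‖ * (a 0)^((s:ℤ))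
        ≤ (M * (x*y)) * (a 0)^((s:ℤ)) := by
          have := zpow_pos (hapos 0) (s:ℤ)
          exact mul_le_mul_of_nonneg_right hRb this.le
      _ = M * (r 0 / r 1)^s := hfin
  have hgeo : Tendsto (fun s : ℕ => M * (r 0 / r 1)^s) atTop (𝓝 0) := by
    have habs : |r 0 / r 1| < 1 := by
      rw [abs_of_pos (div_pos (hrpos 0) (hrpos 1)), div_lt_one (hrpos 1)]
      exact hr01
    have := (tendsto_pow_atTop_nhds_zero_of_abs_lt_one habs).const_mul M
    simpa using this
  have hεlim : Tendsto ε atTop (𝓝 0) := by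
    refine squeeze_zero_norm' ?_ hgeo
    filter_upwards [eventually_ge_atTop 4] with s hs using hεbound s hs
  have final := aux_cpow_tendsto (a 0) (ha1 0) F ε hF hεlim
  simp only [hFdef] at final
  simpa only [ha] using final
end

section
/- Let (t_n) be a strictly increasing sequence of reals with t_1 > 1 and ∑ t_n^{-s} < ∞ for s > 1, and let Z(s) = ∑_{n=1}^∞ t_n^{-s}. Then for each fixed n, the remainder Z(s) − ∑_{k=1}^n t_k^{-s} satisfies (Z(s) − ∑_{k=1}^n t_k^{-s})·t_{n+1}^s → 1 as s → ∞ through the reals (equivalently, the remainder is asymptotic to t_{n+1}^{-s}). -/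
open Filter Topology

set_option maxHeartbeats 1000000 in
/-- The remainder of the generalized zeta series after removing the first `n`
terms is asymptotic to `t_{n+1}^{-s}` as `s → ∞`. -/
theorem zeta_series_remainder_asymptotic (t : ℕ → ℝ) (hpos : ∀ n, 0 < t n)
    (hmono : StrictMono t) (h1 : 1 < t 0)
    (hsum : ∀ s : ℝ, 1 < s → Summable fun n => (t n) ^ (-s)) :
    ∀ n : ℕ,
      Tendsto (fun s : ℝ =>
          ((∑' k, (t k) ^ (-s)) - ∑ k ∈ Finset.range n, (t k) ^ (-s)) * (t n) ^ s)
        atTop (𝓝 1) := by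
  intro n
  set r : ℝ := t n / t (n + 1) with hr
  have hr0 : 0 < r := div_pos (hpos n) (hpos (n+1))
  have hr1 : r < 1 := (div_lt_one (hpos (n+1))).2 (hmono (Nat.lt_succ_self n))
  have hx_pos : ∀ i : ℕ, 0 < t n / t (i + 1 + n) := fun i => div_pos (hpos n) (hpos _)
  have hx_le_r : ∀ i : ℕ, t n / t (i + 1 + n) ≤ r := by
    intro i
    apply div_le_div_of_nonneg_left (hpos n).le (hpos (n+1))
    exact hmono.monotone (by omega)
  -- term rewriting: t m ^ (-s) * t n ^ s = (t n / t m) ^ s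
  have hterm : ∀ (m : ℕ) (s : ℝ), t m ^ (-s) * t n ^ s = (t n / t m) ^ s := by
    intro m s
    rw [Real.div_rpow (hpos n).le (hpos m).le, div_eq_mul_inv,
      ← Real.rpow_neg (hpos m).le, mul_comm]
  -- summability of the shifted/divided series at exponent s
  have hsumm : ∀ s : ℝ, 1 < s → Summable (fun i => (t n / t (i + 1 + n)) ^ s) := by
    intro s hs
    have h0 : Summable (fun i => t (i + (n + 1)) ^ (-s)) :=
      (summable_nat_add_iff (f := fun m => t m ^ (-s)) (n + 1)).2 (hsum s hs)
    have h0' : Summable (fun i => t (i + 1 + n) ^ (-s)) := by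
      refine h0.congr fun i => ?_
      congr 2
      omega
    exact (h0'.mul_right ((t n) ^ s)).congr fun i => hterm _ s
  set C : ℝ := ∑' i, (t n / t (i + 1 + n)) ^ (2 : ℝ) with hC
  have hCsumm : Summable (fun i => (t n / t (i + 1 + n)) ^ (2 : ℝ)) :=
    hsumm 2 one_lt_two
  -- key identity for s > 1
  have key : ∀ s : ℝ, 1 < s →
      ((∑' k, (t k) ^ (-s)) - ∑ k ∈ Finset.range n, (t k) ^ (-s)) * (t n) ^ s
        = 1 + ∑' i, (t n / t (i + 1 + n)) ^ s := by
    intro s hs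
    have hS := hsum s hs
    have htail : Summable (fun i => t (i + n) ^ (-s)) :=
      (summable_nat_add_iff (f := fun m => t m ^ (-s)) n).2 hS
    have e1 : (∑' k, (t k) ^ (-s)) - ∑ k ∈ Finset.range n, (t k) ^ (-s)
        = ∑' i, t (i + n) ^ (-s) := by
      rw [← Summable.sum_add_tsum_nat_add n hS]
      ring
    rw [e1, ← tsum_mul_right]
    have e2 : (fun i => t (i + n) ^ (-s) * t n ^ s)
        = fun i => (t n / t (i + n)) ^ s := funext fun i => hterm _ s
    rw [e2]
    have hg : Summable (fun i => (t n / t (i + n)) ^ s) :=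
      (htail.mul_right ((t n) ^ s)).congr fun i => hterm _ s
    rw [← Summable.sum_add_tsum_nat_add 1 hg]
    simp [Real.rpow_natCast]
    rw [div_self (hpos n).ne']
    rw [Real.one_rpow]
  -- the tail tends to 0
  have htail0 : Tendsto (fun s : ℝ => ∑' i, (t n / t (i + 1 + n)) ^ s) atTop (𝓝 0) := by
    have hub : Tendsto (fun s : ℝ => r ^ (s - 2) * C) atTop (𝓝 0) := by
      have h1' : Tendsto (fun s : ℝ => r ^ s) atTop (𝓝 0) :=
        tendsto_rpow_atTop_of_base_lt_one r (by linarith) hr1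
      have h2' : Tendsto (fun s : ℝ => s - 2) atTop atTop :=
        tendsto_atTop_add_const_right _ (-2) tendsto_id
      simpa using (h1'.comp h2').mul_const C
    refine tendsto_of_tendsto_of_tendsto_of_le_of_le' tendsto_const_nhds hub ?_ ?_
    · filter_upwards [eventually_ge_atTop (2 : ℝ)] with s hs
      exact tsum_nonneg fun i => Real.rpow_nonneg (hx_pos i).le _
    · filter_upwards [eventually_ge_atTop (2 : ℝ)] with s hs
      have hs1 : (1 : ℝ) < s := by linarith
      have hle : ∀ i, (t n / t (i + 1 + n)) ^ s
          ≤ r ^ (s - 2) * (t n / t (i + 1 + n)) ^ (2 : ℝ) := by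
        intro i
        have : (t n / t (i + 1 + n)) ^ s
            = (t n / t (i + 1 + n)) ^ (s - 2) * (t n / t (i + 1 + n)) ^ (2 : ℝ) := by
          rw [← Real.rpow_add (hx_pos i)]; ring_nf
        rw [this]
        apply mul_le_mul_of_nonneg_right
        · exact Real.rpow_le_rpow (hx_pos i).le (hx_le_r i) (by linarith)
        · exact Real.rpow_nonneg (hx_pos i).le _
      calc ∑' i, (t n / t (i + 1 + n)) ^ s
          ≤ ∑' i, r ^ (s - 2) * (t n / t (i + 1 + n)) ^ (2 : ℝ) :=
            Summable.tsum_le_tsum hle (hsumm s hs1) (hCsumm.mul_left _)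
        _ = r ^ (s - 2) * C := tsum_mul_left
  have final : Tendsto (fun s : ℝ => 1 + ∑' i, (t n / t (i + 1 + n)) ^ s)
      atTop (𝓝 1) := by
    simpa using (tendsto_const_nhds (x := (1:ℝ))).add htail0
  refine final.congr' ?_
  filter_upwards [eventually_gt_atTop (1 : ℝ)] with s hs
  exact (key s hs).symm
end
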